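/- Let H, R be finite-dimensional complex Hilbert spaces, B = ℂ², |ψ⟩ a unit vector in H⊗B⊗R, n ≥ 1, and η ∈ [0,1]. If there exists a (1, 1−η)-superdense decoder against |ψ⟩, then the n-slot candidate EFI pair (ρ̄₀, ρ̄₁) built from |ψ⟩ is statistically distinguishable with advantage at least 1 − 2nη: there exists a matrix M with 0 ≤ M ≤ I on (B⊗R)^{⊗n} ⊗ ℂ^{4ⁿ} ⊗ ℂ² such that Tr[M(ρ̄₁ − ρ̄₀)] ≥ 1 − 2nη. -/

import Mathlib

/-!
Measure every slot with the effects `E_{xz}` of the superdense decoder (in the Heisenberg picture)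
to get a guess `(x̂, ẑ)` of the Pauli key, and accept when the classical bit differs from the
predicted parity `a⃗·x̂ ⊕ a⃗'·ẑ`. Averaged over `(a⃗, a⃗')`, a wrong guess contributes equally to
`ρ̄₀` and `ρ̄₁`, by orthogonality of the characters `a ↦ (-1)^{a·w}` of `𝔽₂ⁿ`, so
`Tr[M(ρ̄₁ - ρ̄₀)] = pⁿ` where `p = ¼ Σ_{xz} Tr[E_{xz} ρ^{xz}]` is the probability of decoding one
slot correctly. The decoder hypotheses give `p ≥ 1 - 3η/4`, and Bernoulli's inequality gives
`pⁿ ≥ 1 - 2nη`. Since `0 ≤ Σ E_{xz} ≤ 1`, the tensor products of the `E`'s stay between `0`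
and `1`, which makes `0 ≤ M ≤ 1`.
-/

open Matrix BigOperators
open scoped ComplexOrder

noncomputable section

namespace BHRD

/-- A (qu)bit index. -/
abbrev Bit := ZMod 2

/-- The Pauli `X` matrix. -/
def Xm : Matrix Bit Bit ℂ := Matrix.of fun i j => if i = j + 1 then 1 else 0

/-- The Pauli `Z` matrix. -/
def Zm : Matrix Bit Bit ℂ := Matrix.of fun i j => if i = j then (if j = 1 then -1 else 1) else 0

/-- The Pauli mask `X^x Z^z`. -/
def pauli (x z : Bit) : Matrix Bit Bit ℂ := Xm ^ x.val * Zm ^ z.val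

/-- The EPR vector `(|00⟩+|11⟩)/√2`. -/
def epr : Bit × Bit → ℂ := fun p => if p.1 = p.2 then (((Real.sqrt 2 : ℝ) : ℂ))⁻¹ else 0

variable {dH dR : ℕ}

/-- The reduced density matrix of `|ψ⟩ ∈ H ⊗ B ⊗ R` on `B ⊗ R`, i.e. `Tr_H |ψ⟩⟨ψ|`. -/
def rhoBR (ψ : Fin dH × Bit × Fin dR → ℂ) :
    Matrix (Bit × Fin dR) (Bit × Fin dR) ℂ :=
  Matrix.of fun p q => ∑ h : Fin dH, ψ (h, p) * (starRingEnd ℂ) (ψ (h, q))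

/-- `(X^x Z^z) ⊗ I_R` acting on `B ⊗ R`. -/
def maskB (dR : ℕ) (x z : Bit) : Matrix (Bit × Fin dR) (Bit × Fin dR) ℂ :=
  Matrix.of fun p q => if p.2 = q.2 then pauli x z p.1 q.1 else 0

/-- The masked state `ρ^{xz} = (X^x Z^z ⊗ I) Tr_H|ψ⟩⟨ψ| (X^x Z^z ⊗ I)†`. -/
def rhoXZ (ψ : Fin dH × Bit × Fin dR → ℂ) (x z : Bit) :
    Matrix (Bit × Fin dR) (Bit × Fin dR) ℂ :=
  maskB dR x z * rhoBR ψ * (maskB dR x z)ᴴ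

/-- `K` is a family of Kraus operators for a (trace-preserving) quantum channel. -/
def IsKraus {α β : Type*} [Fintype α] [Fintype β] [DecidableEq β] {k : ℕ}
    (K : Fin k → Matrix α β ℂ) : Prop :=
  ∑ i, (K i)ᴴ * K i = 1

/-- Application of the channel with Kraus operators `K` to a state `ρ`. -/
def applyCh {α β : Type*} [Fintype α] [Fintype β] {k : ℕ}
    (K : Fin k → Matrix α β ℂ) (ρ : Matrix β β ℂ) : Matrix α α ℂ :=
  ∑ i, K i * ρ * (K i)ᴴ

/-- The extension `id_B ⊗ A` of a channel `A : R → D ⊗ F` given by a Kraus operator `K`: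
a Kraus operator from `B ⊗ R` to `B ⊗ D ⊗ F`. -/
def extB (K : Matrix (Bit × Bit) (Fin dR) ℂ) :
    Matrix (Bit × Bit × Bit) (Bit × Fin dR) ℂ :=
  Matrix.of fun p q => if p.1 = q.1 then K p.2 q.2 else 0

/-- The projector `I_{B⊗D} ⊗ |0⟩⟨0|_F` on `B ⊗ D ⊗ F`. -/
def PF0 : Matrix (Bit × Bit × Bit) (Bit × Bit × Bit) ℂ :=
  Matrix.of fun p q =>
    if p.1 = q.1 ∧ p.2.1 = q.2.1 ∧ p.2.2 = 0 ∧ q.2.2 = 0 then 1 else 0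

/-- The projector `|epr⟩⟨epr|_{B⊗D} ⊗ |0⟩⟨0|_F` on `B ⊗ D ⊗ F`. -/
def Pepr0 : Matrix (Bit × Bit × Bit) (Bit × Bit × Bit) ℂ :=
  Matrix.of fun p q =>
    (if p.2.2 = 0 ∧ q.2.2 = 0 then 1 else 0) *
      (epr (p.1, p.2.1) * (starRingEnd ℂ) (epr (q.1, q.2.1)))

/-- `K` is (the Kraus family of) a `(γ,ε)`-radiation decoder against `ψ`. -/
def IsRadDecoder (ψ : Fin dH × Bit × Fin dR → ℂ) (γ ε : ℝ) {k : ℕ}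
    (K : Fin k → Matrix (Bit × Bit) (Fin dR) ℂ) : Prop :=
  IsKraus K ∧
  γ ≤ ((PF0 * applyCh (fun i => extB (K i)) (rhoBR ψ)).trace).re ∧
  ((PF0 * applyCh (fun i => extB (K i)) (rhoBR ψ)).trace).re * (1/4 + (3/4) * ε) ≤
    ((Pepr0 * applyCh (fun i => extB (K i)) (rhoBR ψ)).trace).re

/-- The projector `I_P ⊗ |0⟩⟨0|_F` on `P ⊗ F`. -/
def QF0 : Matrix ((Bit × Bit) × Bit) ((Bit × Bit) × Bit) ℂ :=
  Matrix.of fun p q => if p.1 = q.1 ∧ p.2 = 0 ∧ q.2 = 0 then 1 else 0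

/-- The projector `|x,z⟩⟨x,z|_P ⊗ |0⟩⟨0|_F` on `P ⊗ F`. -/
def Qxz0 (x z : Bit) : Matrix ((Bit × Bit) × Bit) ((Bit × Bit) × Bit) ℂ :=
  Matrix.of fun p q => if p = ((x, z), 0) ∧ q = ((x, z), 0) then 1 else 0

/-- `K` is (the Kraus family of) a `(γ,ε)`-superdense decoder against `ψ`. -/
def IsSupDecoder (ψ : Fin dH × Bit × Fin dR → ℂ) (γ ε : ℝ) {k : ℕ}
    (K : Fin k → Matrix ((Bit × Bit) × Bit) (Bit × Fin dR) ℂ) : Prop :=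
  IsKraus K ∧
  γ ≤ (1/4) * ∑ x : Bit, ∑ z : Bit, ((QF0 * applyCh K (rhoXZ ψ x z)).trace).re ∧
  ((1/4) * ∑ x : Bit, ∑ z : Bit, ((QF0 * applyCh K (rhoXZ ψ x z)).trace).re) *
      (1/4 + (3/4) * ε) ≤
    (1/4) * ∑ x : Bit, ∑ z : Bit, ((Qxz0 x z * applyCh K (rhoXZ ψ x z)).trace).re

end BHRD

namespace BHRD

variable {dH dR : ℕ}

/-- Inner product of bit vectors mod 2. -/
def dotB {n : ℕ} (a x : Fin n → Bit) : Bit := ∑ i, a i * x i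

/-- The product state `ρ^{x⃗z⃗} = ⊗ᵢ ρ^{xᵢzᵢ}` on `(B ⊗ R)^{⊗n}`. -/
def rhoVec (ψ : Fin dH × Bit × Fin dR → ℂ) {n : ℕ} (x z : Fin n → Bit) :
    Matrix (Fin n → Bit × Fin dR) (Fin n → Bit × Fin dR) ℂ :=
  Matrix.of fun u v => ∏ i, rhoXZ ψ (x i) (z i) (u i) (v i)

/-- The `n`-slot candidate EFI state
`ρ̄_b = 4^{-2n} Σ_{x⃗,z⃗,a⃗,a⃗'} ρ^{x⃗z⃗} ⊗ |a⃗,a⃗'⟩⟨a⃗,a⃗'| ⊗ |c ⊕ b⟩⟨c ⊕ b|` with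
`c = (a⃗·x⃗) ⊕ (a⃗'·z⃗)`, on `(B ⊗ R)^{⊗n} ⊗ ℂ^{4ⁿ} ⊗ ℂ²`. -/
def rbarN (ψ : Fin dH × Bit × Fin dR → ℂ) (n : ℕ) (b : Bit) :
    Matrix ((Fin n → Bit × Fin dR) × ((Fin n → Bit) × (Fin n → Bit)) × Bit)
           ((Fin n → Bit × Fin dR) × ((Fin n → Bit) × (Fin n → Bit)) × Bit) ℂ :=
  (((4 : ℂ) ^ (2 * n))⁻¹) •
    ∑ x : Fin n → Bit, ∑ z : Fin n → Bit, ∑ a : Fin n → Bit, ∑ a' : Fin n → Bit,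
      Matrix.of fun p q =>
        (if p.2 = ((a, a'), dotB a x + dotB a' z + b) ∧
            q.2 = ((a, a'), dotB a x + dotB a' z + b) then 1 else 0) *
          rhoVec ψ x z p.1 q.1

end BHRD

namespace BHRD

theorem prod_ite_lt_ite_eq {ι R : Type*} [Fintype ι] [CommMonoid R] [LinearOrder ι] (i : ι)
    (a b c : ι → R) :
    ∏ j, (if j < i then a j else if j = i then b j else c j)
      = b i * (∏ j with j < i, a j) * ∏ j with i < j, c j := by
  have hi : ∀ j, (¬j < i ∧ j = i) ↔ j = i := fun j => ⟨And.right, fun h => ⟨h.not_lt, h⟩⟩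
  have hgt : ∀ j, (¬j < i ∧ ¬j = i) ↔ i < j := fun j => by
    rw [not_lt, ← lt_iff_le_and_ne.trans (and_congr_right' ne_comm)]
  rw [Finset.prod_ite, Finset.prod_ite, Finset.filter_filter, Finset.filter_filter]
  simp only [hi, hgt, Finset.filter_eq', Finset.mem_univ, if_true, Finset.prod_singleton]
  rw [mul_left_comm, mul_assoc]

theorem prod_sum_sum {ι α β R : Type*} [Fintype ι] [DecidableEq ι] [Fintype α] [Fintype β]
    [CommSemiring R] (f : ι → α → β → R) :
    ∏ i, ∑ s, ∑ t, f i s t = ∑ x : ι → α, ∑ z : ι → β, ∏ i, f i (x i) (z i) := by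
  rw [Fintype.prod_sum]
  exact Finset.sum_congr rfl fun x _ => Fintype.prod_sum fun i t => f i (x i) t

theorem sum_sum_comm_sum_sum {α β γ δ M : Type*} [Fintype α] [Fintype β] [Fintype γ]
    [Fintype δ] [AddCommMonoid M] (f : α → β → γ → δ → M) :
    ∑ a, ∑ b, ∑ c, ∑ d, f a b c d = ∑ c, ∑ d, ∑ a, ∑ b, f a b c d := by
  calc ∑ a, ∑ b, ∑ c, ∑ d, f a b c d
        = ∑ p : α × β, ∑ q : γ × δ, f p.1 p.2 q.1 q.2 := by simp only [Fintype.sum_prod_type]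
    _ = ∑ q : γ × δ, ∑ p : α × β, f p.1 p.2 q.1 q.2 := Finset.sum_comm
    _ = ∑ c, ∑ d, ∑ a, ∑ b, f a b c d := by simp only [Fintype.sum_prod_type]

section PiKronecker

variable {ι m n R : Type*} [Fintype ι]

def piKronecker [CommMonoid R] (A : ι → Matrix m n R) : Matrix (ι → m) (ι → n) R :=
  Matrix.of fun u v => ∏ i, A i (u i) (v i)

theorem piKronecker_mul [CommSemiring R] [DecidableEq ι] [Fintype n] {l : Type*}
    (A : ι → Matrix l m R) (B : ι → Matrix m n R) [Fintype m] :
    piKronecker A * piKronecker B = piKronecker fun i => A i * B i := by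
  ext u v
  simp only [piKronecker, mul_apply, of_apply, Fintype.prod_sum, Finset.prod_mul_distrib]

theorem trace_piKronecker [CommSemiring R] [DecidableEq ι] [Fintype m] (A : ι → Matrix m m R) :
    (piKronecker A).trace = ∏ i, (A i).trace := by
  simp only [trace, diag, piKronecker, of_apply, Fintype.prod_sum]

theorem conjTranspose_piKronecker [CommSemiring R] [StarRing R] (A : ι → Matrix m n R) :
    (piKronecker A)ᴴ = piKronecker fun i => (A i)ᴴ := by
  ext u v
  simp [piKronecker, conjTranspose_apply, star_prod]

theorem piKronecker_one [CommSemiring R] [DecidableEq m] :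
    piKronecker (fun _ : ι => (1 : Matrix m m R)) = 1 := by
  ext u v
  simp [piKronecker, one_apply, Finset.prod_boole, funext_iff]

open scoped MatrixOrder in
theorem posSemidef_piKronecker {𝕜 : Type*} [RCLike 𝕜] [DecidableEq ι] [Fintype m]
    {A : ι → Matrix m m 𝕜} (hA : ∀ i, (A i).PosSemidef) : (piKronecker A).PosSemidef := by
  classical
  choose B hB using fun i => CStarAlgebra.nonneg_iff_eq_star_mul_self.mp (hA i).nonneg
  have : piKronecker A = (piKronecker B)ᴴ * piKronecker B := by
    rw [conjTranspose_piKronecker, piKronecker_mul]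
    exact congrArg _ (funext hB)
  rw [this]
  exact posSemidef_conjTranspose_mul_self _

theorem posSemidef_one_sub_piKronecker {𝕜 : Type*} [RCLike 𝕜] [LinearOrder ι] [Fintype m]
    [DecidableEq m] {G : ι → Matrix m m 𝕜} (hG : ∀ i, (G i).PosSemidef)
    (hG1 : ∀ i, (1 - G i).PosSemidef) : (1 - piKronecker G).PosSemidef := by
  have telescope : 1 - piKronecker G = ∑ i, piKronecker fun j =>
      if j < i then G j else if j = i then 1 - G j else 1 := by
    rw [← piKronecker_one]
    ext u v
    have h := Finset.prod_sub_ordered Finset.univ (fun j => (1 : Matrix m m 𝕜) (u j) (v j))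
      (fun j => (1 - G j) (u j) (v j))
    simp only [Matrix.sub_apply, sub_sub_cancel] at h
    simp only [Matrix.sub_apply, Matrix.sum_apply, piKronecker, of_apply]
    rw [h, sub_sub_cancel]
    refine Finset.sum_congr rfl fun i _ => ?_
    have entry : ∀ j, (if j < i then G j else if j = i then 1 - G j else 1) (u j) (v j) =
        if j < i then G j (u j) (v j) else if j = i then (1 - G j) (u j) (v j)
        else (1 : Matrix m m 𝕜) (u j) (v j) := fun j => by split_ifs <;> rfl
    rw [Finset.prod_congr rfl fun j _ => entry j, prod_ite_lt_ite_eq, Matrix.sub_apply]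
  rw [telescope]
  refine posSemidef_sum _ fun i _ => posSemidef_piKronecker fun j => ?_
  split_ifs
  exacts [hG j, hG1 j, PosSemidef.one]

theorem sum_sum_piKronecker {α β : Type*} [DecidableEq ι] [Fintype α] [Fintype β]
    [CommSemiring R] (f : ι → α → β → Matrix m n R) :
    ∑ x : ι → α, ∑ z : ι → β, piKronecker (fun i => f i (x i) (z i)) =
      piKronecker fun i => ∑ s, ∑ t, f i s t := by
  ext u v
  simp only [piKronecker, Matrix.sum_apply, of_apply, prod_sum_sum]

end PiKronecker

section BlockDiagonal

variable {o m : Type*} [Fintype o] [DecidableEq o] [Fintype m]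

open scoped MatrixOrder in
theorem posSemidef_blockDiagonal {𝕜 : Type*} [RCLike 𝕜] {M : o → Matrix m m 𝕜}
    (hM : ∀ c, (M c).PosSemidef) : (blockDiagonal M).PosSemidef := by
  classical
  choose B hB using fun c => CStarAlgebra.nonneg_iff_eq_star_mul_self.mp (hM c).nonneg
  have : blockDiagonal M = (blockDiagonal B)ᴴ * blockDiagonal B := by
    rw [blockDiagonal_conjTranspose, ← blockDiagonal_mul]
    exact congrArg _ (funext hB)
  rw [this]
  exact posSemidef_conjTranspose_mul_self _

theorem trace_blockDiagonal_mul_single {R : Type*} [CommSemiring R] (M : o → Matrix m m R)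
    (c : o) (W : Matrix m m R) :
    (blockDiagonal M * blockDiagonal (Pi.single c W)).trace = (M c * W).trace := by
  rw [← blockDiagonal_mul, trace_blockDiagonal, Finset.sum_eq_single c]
  · simp
  · intro d _ hd
    simp [Pi.single_eq_of_ne hd]
  · simp

end BlockDiagonal

open scoped MatrixOrder in
theorem trace_mul_nonneg {m : Type*} [Fintype m] [DecidableEq m] {A B : Matrix m m ℂ}
    (hA : A.PosSemidef) (hB : B.PosSemidef) : 0 ≤ (A * B).trace := by
  obtain ⟨C, rfl⟩ := CStarAlgebra.nonneg_iff_eq_star_mul_self.mp hA.nonneg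
  rw [star_eq_conjTranspose, Matrix.mul_assoc, trace_mul_comm]
  simpa only [Matrix.mul_assoc] using (hB.mul_mul_conjTranspose_same C).trace_nonneg

section Channel

variable {α β : Type*} [Fintype α] [Fintype β] {k : ℕ} (K : Fin k → Matrix α β ℂ)

theorem trace_mul_applyCh (Q : Matrix α α ℂ) (ρ : Matrix β β ℂ) :
    (Q * applyCh K ρ).trace = (applyCh (fun i => (K i)ᴴ) Q * ρ).trace := by
  simp only [applyCh, Matrix.mul_sum, Matrix.sum_mul, trace_sum, conjTranspose_conjTranspose]
  refine Finset.sum_congr rfl fun i _ => ?_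
  rw [← Matrix.mul_assoc, trace_mul_cycle]
  simp only [Matrix.mul_assoc]

theorem posSemidef_applyCh {ρ : Matrix β β ℂ} (hρ : ρ.PosSemidef) :
    (applyCh K ρ).PosSemidef :=
  posSemidef_sum _ fun i _ => hρ.mul_mul_conjTranspose_same (K i)

theorem applyCh_sub (ρ σ : Matrix β β ℂ) :
    applyCh K (ρ - σ) = applyCh K ρ - applyCh K σ := by
  simp only [applyCh, Matrix.mul_sub, Matrix.sub_mul, Finset.sum_sub_distrib]

theorem applyCh_sum {ι : Type*} (s : Finset ι) (ρ : ι → Matrix β β ℂ) :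
    applyCh K (∑ j ∈ s, ρ j) = ∑ j ∈ s, applyCh K (ρ j) := by
  simp only [applyCh, Matrix.mul_sum, Matrix.sum_mul]
  exact Finset.sum_comm

theorem applyCh_conjTranspose_one [DecidableEq α] [DecidableEq β] (hK : IsKraus K) :
    applyCh (fun i => (K i)ᴴ) 1 = 1 := by
  simpa [applyCh, IsKraus] using hK

theorem posSemidef_one_sub_applyCh_conjTranspose [DecidableEq α] [DecidableEq β] (hK : IsKraus K)
    {Q : Matrix α α ℂ} (hQ : (1 - Q).PosSemidef) :
    (1 - applyCh (fun i => (K i)ᴴ) Q).PosSemidef := by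
  rw [← applyCh_conjTranspose_one K hK, ← applyCh_sub]
  exact posSemidef_applyCh _ hQ

end Channel

def bitSign (s : Bit) : ℂ := if s = 0 then 1 else -1

theorem bitSign_add (s t : Bit) : bitSign (s + t) = bitSign s * bitSign t := by
  have h : s + t = 0 ↔ (s = 0 ↔ t = 0) := by revert s t; decide
  unfold bitSign
  by_cases hs : s = 0 <;> by_cases ht : t = 0 <;> simp [h, hs, ht]

theorem sum_bitSign_dotB {n : ℕ} (w : Fin n → Bit) :
    ∑ a : Fin n → Bit, bitSign (dotB a w) = if w = 0 then 2 ^ n else 0 := by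
  have hprod : ∀ a : Fin n → Bit, bitSign (dotB a w) = ∏ i, bitSign (a i * w i) := fun a => by
    unfold dotB
    induction (Finset.univ : Finset (Fin n)) using Finset.cons_induction with
    | empty => simp [bitSign]
    | cons i s _ ih => rw [Finset.sum_cons, Finset.prod_cons, bitSign_add, ih]
  have hslot : ∀ s : Bit, ∑ t : Bit, bitSign (t * s) = if s = 0 then 2 else 0 := by
    have hbit : ∀ t : Bit, t = 0 ∨ t = 1 := by decide
    intro s
    rw [Fintype.sum_eq_add (0 : Bit) 1 (by decide) fun t ht => ((hbit t).elim ht.1 ht.2).elim]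
    rcases hbit s with rfl | rfl <;> norm_num [bitSign]
  simp only [hprod, ← Fintype.prod_sum fun i t => bitSign (t * w i), hslot, Finset.prod_ite_zero,
    Finset.prod_const, Finset.card_univ, Fintype.card_fin, Finset.mem_univ, forall_const,
    funext_iff, Pi.zero_apply]

theorem ite_sub_ite_eq_bitSign (s t : Bit) :
    ((if s + 1 = t + 1 then 1 else 0) - if s = t + 1 then 1 else 0 : ℂ) = bitSign (s + t) := by
  have h1 : s + 1 = t + 1 ↔ s + t = 0 := by revert s t; decide
  have h2 : s = t + 1 ↔ ¬s + t = 0 := by revert s t; decide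
  simp only [h1, h2, bitSign]
  split_ifs <;> norm_num

theorem dotB_add_right {n : ℕ} (a x y : Fin n → Bit) : dotB a (x + y) = dotB a x + dotB a y :=
  dotProduct_add a x y

theorem add_eq_zero_iff_bitVec {n : ℕ} {x y : Fin n → Bit} : x + y = 0 ↔ x = y := by
  simp only [funext_iff, Pi.add_apply, Pi.zero_apply, CharTwo.add_eq_zero]

section ParityGuess

/-- Decoding `(x, z)` predicts the hidden parity `a·x + a'·z`; the effect for the classical
register value `c = ((a, a'), β)` collects the decodings for which `β` differs from it, i.e. it
guesses `b = 1`. -/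
def parityGuess {V : Type*} [AddCommMonoid V] {n : ℕ} (T : (Fin n → Bit) → (Fin n → Bit) → V)
    (c : ((Fin n → Bit) × (Fin n → Bit)) × Bit) : V :=
  ∑ x : Fin n → Bit, ∑ z : Fin n → Bit,
    if c.2 = dotB c.1.1 x + dotB c.1.2 z + 1 then T x z else 0

theorem sum_parityGuess_sub {V : Type*} [AddCommGroup V] [Module ℂ V] {n : ℕ}
    (T : (Fin n → Bit) → (Fin n → Bit) → V) (x z : Fin n → Bit) :
    ∑ a : Fin n → Bit, ∑ a' : Fin n → Bit,
      (parityGuess T ((a, a'), dotB a x + dotB a' z + 1) -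
        parityGuess T ((a, a'), dotB a x + dotB a' z)) = (4 : ℂ) ^ n • T x z := by
  have hsign : ∀ a a' x' z' : Fin n → Bit,
      ((if dotB a x + dotB a' z + 1 = dotB a x' + dotB a' z' + 1 then T x' z' else 0) -
        if dotB a x + dotB a' z = dotB a x' + dotB a' z' + 1 then T x' z' else 0) =
      (bitSign (dotB a (x + x')) * bitSign (dotB a' (z + z'))) • T x' z' := by
    intro a a' x' z'
    rw [← bitSign_add, dotB_add_right, dotB_add_right, add_add_add_comm,
      ← ite_sub_ite_eq_bitSign, sub_smul, ite_smul, ite_smul, one_smul, zero_smul]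
  simp only [parityGuess, ← Finset.sum_sub_distrib, hsign]
  rw [sum_sum_comm_sum_sum]
  simp only [← Finset.sum_smul, ← Finset.sum_mul_sum, sum_bitSign_dotB, add_eq_zero_iff_bitVec,
    ite_mul, mul_ite, zero_mul, mul_zero, ite_smul, zero_smul, Finset.sum_ite_eq,
    Finset.mem_univ, if_true]
  norm_num [← mul_pow]

variable {m 𝕜 : Type*} [RCLike 𝕜] {n : ℕ}

theorem posSemidef_parityGuess {T : (Fin n → Bit) → (Fin n → Bit) → Matrix m m 𝕜}
    (hT : ∀ x z, (T x z).PosSemidef) (c : ((Fin n → Bit) × (Fin n → Bit)) × Bit) :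
    (parityGuess T c).PosSemidef :=
  posSemidef_sum _ fun x _ => posSemidef_sum _ fun z _ => by
    split_ifs
    exacts [hT x z, PosSemidef.zero]

theorem posSemidef_one_sub_parityGuess [Fintype m] [DecidableEq m]
    {T : (Fin n → Bit) → (Fin n → Bit) → Matrix m m 𝕜}
    (hT : ∀ x z, (T x z).PosSemidef) (hT1 : (1 - ∑ x, ∑ z, T x z).PosSemidef)
    (c : ((Fin n → Bit) × (Fin n → Bit)) × Bit) : (1 - parityGuess T c).PosSemidef := by
  have hsum : parityGuess T c +
      ∑ x, ∑ z, (if c.2 = dotB c.1.1 x + dotB c.1.2 z + 1 then 0 else T x z) =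
      ∑ x, ∑ z, T x z := by
    simp only [parityGuess, ← Finset.sum_add_distrib]
    refine Finset.sum_congr rfl fun x _ => Finset.sum_congr rfl fun z _ => ?_
    split_ifs <;> simp
  rw [← hsum, sub_add_eq_sub_sub] at hT1
  rw [← sub_add_cancel (1 - parityGuess T c)
    (∑ x, ∑ z, if c.2 = dotB c.1.1 x + dotB c.1.2 z + 1 then 0 else T x z)]
  refine hT1.add (posSemidef_sum _ fun x _ => posSemidef_sum _ fun z _ => ?_)
  split_ifs
  exacts [PosSemidef.zero, hT x z]

end ParityGuess

def distinguisher {m : Type*} (E : Bit → Bit → Matrix m m ℂ) (n : ℕ) :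
    Matrix ((Fin n → m) × ((Fin n → Bit) × (Fin n → Bit)) × Bit)
      ((Fin n → m) × ((Fin n → Bit) × (Fin n → Bit)) × Bit) ℂ :=
  blockDiagonal (parityGuess fun x z => piKronecker fun i => E (x i) (z i))

section Distinguisher

variable {m : Type*} [Fintype m] {E : Bit → Bit → Matrix m m ℂ}

theorem posSemidef_distinguisher (hE : ∀ s t, (E s t).PosSemidef) (n : ℕ) :
    (distinguisher E n).PosSemidef :=
  posSemidef_blockDiagonal <|
    posSemidef_parityGuess fun _ _ => posSemidef_piKronecker fun _ => hE _ _

theorem posSemidef_one_sub_distinguisher [DecidableEq m] (hE : ∀ s t, (E s t).PosSemidef)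
    (hE1 : (1 - ∑ s, ∑ t, E s t).PosSemidef) (n : ℕ) :
    (1 - distinguisher E n).PosSemidef := by
  rw [distinguisher, ← blockDiagonal_one, ← blockDiagonal_sub]
  refine posSemidef_blockDiagonal <| posSemidef_one_sub_parityGuess
    (fun _ _ => posSemidef_piKronecker fun _ => hE _ _) ?_
  rw [sum_sum_piKronecker fun _ => E]
  exact posSemidef_one_sub_piKronecker
    (fun _ => posSemidef_sum _ fun s _ => posSemidef_sum _ fun t _ => hE s t) fun _ => hE1

end Distinguisher

section EFI

variable {dH dR : ℕ}

theorem rhoVec_eq_piKronecker (ψ : Fin dH × Bit × Fin dR → ℂ) {n : ℕ}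
    (x z : Fin n → Bit) :
    rhoVec ψ x z = piKronecker fun i => rhoXZ ψ (x i) (z i) :=
  rfl

theorem rbarN_eq_sum_blockDiagonal (ψ : Fin dH × Bit × Fin dR → ℂ) (n : ℕ) (b : Bit) :
    rbarN ψ n b = ((4 : ℂ) ^ (2 * n))⁻¹ •
      ∑ x : Fin n → Bit, ∑ z : Fin n → Bit, ∑ a : Fin n → Bit, ∑ a' : Fin n → Bit,
        blockDiagonal (Pi.single ((a, a'), dotB a x + dotB a' z + b) (rhoVec ψ x z)) := by
  rw [rbarN]
  refine congrArg _ ?_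
  refine Finset.sum_congr rfl fun x _ => Finset.sum_congr rfl fun z _ =>
    Finset.sum_congr rfl fun a _ => Finset.sum_congr rfl fun a' _ => ?_
  ext p q
  simp only [of_apply, blockDiagonal_apply, Pi.single_apply]
  split_ifs <;> simp_all [Matrix.zero_apply]

theorem trace_blockDiagonal_mul_rbarN (ψ : Fin dH × Bit × Fin dR → ℂ) {n : ℕ}
    (M : ((Fin n → Bit) × (Fin n → Bit)) × Bit →
      Matrix (Fin n → Bit × Fin dR) (Fin n → Bit × Fin dR) ℂ) (b : Bit) :
    (blockDiagonal M * rbarN ψ n b).trace = ((4 : ℂ) ^ (2 * n))⁻¹ *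
      ∑ x : Fin n → Bit, ∑ z : Fin n → Bit, ∑ a : Fin n → Bit, ∑ a' : Fin n → Bit,
        (M ((a, a'), dotB a x + dotB a' z + b) * rhoVec ψ x z).trace := by
  simp only [rbarN_eq_sum_blockDiagonal, Matrix.mul_smul, trace_smul, Matrix.mul_sum, trace_sum,
    trace_blockDiagonal_mul_single, smul_eq_mul]

theorem trace_distinguisher_mul_rbarN_sub
    (E : Bit → Bit → Matrix (Bit × Fin dR) (Bit × Fin dR) ℂ) (ψ : Fin dH × Bit × Fin dR → ℂ)
    (n : ℕ) :
    (distinguisher E n * (rbarN ψ n 1 - rbarN ψ n 0)).trace =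
      ((1 / 4 : ℂ) * ∑ x : Bit, ∑ z : Bit, (E x z * rhoXZ ψ x z).trace) ^ n := by
  let G := parityGuess fun (x z : Fin n → Bit) => piKronecker fun i => E (x i) (z i)
  calc (distinguisher E n * (rbarN ψ n 1 - rbarN ψ n 0)).trace
      = ((4 : ℂ) ^ (2 * n))⁻¹ * ∑ x : Fin n → Bit, ∑ z : Fin n → Bit,
          ((∑ a : Fin n → Bit, ∑ a' : Fin n → Bit, (G ((a, a'), dotB a x + dotB a' z + 1) -
            G ((a, a'), dotB a x + dotB a' z))) * rhoVec ψ x z).trace := by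
        rw [Matrix.mul_sub, trace_sub, distinguisher, trace_blockDiagonal_mul_rbarN,
          trace_blockDiagonal_mul_rbarN, ← mul_sub]
        simp only [G, add_zero, ← Finset.sum_sub_distrib, ← trace_sub, ← Matrix.sub_mul,
          Matrix.sum_mul, trace_sum]
    _ = ((4 : ℂ) ^ (2 * n))⁻¹ * ∑ x : Fin n → Bit, ∑ z : Fin n → Bit,
          (4 : ℂ) ^ n * ∏ i, (E (x i) (z i) * rhoXZ ψ (x i) (z i)).trace := by
        simp only [G, sum_parityGuess_sub, smul_mul, trace_smul, rhoVec_eq_piKronecker,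
          piKronecker_mul, trace_piKronecker, smul_eq_mul]
    _ = ((1 / 4 : ℂ) * ∑ x : Bit, ∑ z : Bit, (E x z * rhoXZ ψ x z).trace) ^ n := by
        simp only [← Finset.mul_sum]
        rw [← prod_sum_sum fun _ x z => (E x z * rhoXZ ψ x z).trace, Finset.prod_const,
          Finset.card_univ, Fintype.card_fin,
          pow_mul', sq, mul_inv, mul_assoc, inv_mul_cancel_left₀ (pow_ne_zero n four_ne_zero),
          mul_pow, one_div, inv_pow]

end EFI

theorem Qxz0_eq_diagonal (x z : Bit) :
    Qxz0 x z = diagonal fun p => if p = ((x, z), 0) then 1 else 0 := by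
  ext p q
  by_cases h : p = q <;> simp [Qxz0, h]
  exact fun hp hq => h (hp.trans hq.symm)

theorem QF0_eq_diagonal : QF0 = diagonal fun p => if p.2 = 0 then 1 else 0 := by
  ext p q
  by_cases h : p = q <;> simp [QF0, h]
  exact fun h1 h2 h3 => h (Prod.ext h1 (h2.trans h3.symm))

theorem sum_Qxz0 : ∑ x, ∑ z, Qxz0 x z = QF0 := by
  ext p q
  simp only [Matrix.sum_apply, Qxz0_eq_diagonal, QF0_eq_diagonal, diagonal_apply]
  split_ifs with h hc
  · obtain ⟨⟨a, b⟩, c⟩ := p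
    subst hc
    simp only [Prod.mk.injEq, and_true, ite_and]
    rw [Fintype.sum_eq_single a fun x hx => by simp [Ne.symm hx]]
    simp
  · exact Finset.sum_eq_zero fun x _ => Finset.sum_eq_zero fun z _ =>
      if_neg fun hp => hc (congrArg Prod.snd hp)
  · simp

theorem posSemidef_Qxz0 (x z : Bit) : (Qxz0 x z).PosSemidef := by
  rw [Qxz0_eq_diagonal, posSemidef_diagonal_iff]
  intro p
  split_ifs <;> norm_num

theorem posSemidef_one_sub_QF0 : (1 - QF0).PosSemidef := by
  rw [QF0_eq_diagonal, ← diagonal_one, diagonal_sub, posSemidef_diagonal_iff]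
  intro p
  split_ifs <;> norm_num

section Decoder

variable {dH dR : ℕ}

theorem posSemidef_one_sub_sum_applyCh_Qxz0 {k : ℕ}
    {K : Fin k → Matrix ((Bit × Bit) × Bit) (Bit × Fin dR) ℂ} (hK : IsKraus K) :
    (1 - ∑ x, ∑ z, applyCh (fun i => (K i)ᴴ) (Qxz0 x z)).PosSemidef := by
  simp only [← applyCh_sum, sum_Qxz0]
  exact posSemidef_one_sub_applyCh_conjTranspose K hK posSemidef_one_sub_QF0

theorem posSemidef_rhoXZ (ψ : Fin dH × Bit × Fin dR → ℂ) (x z : Bit) :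
    (rhoXZ ψ x z).PosSemidef := by
  have : rhoBR ψ = (of fun h p => star (ψ (h, p)))ᴴ * of fun h p => star (ψ (h, p)) := by
    ext p q
    simp [rhoBR, mul_apply]
  rw [rhoXZ, this]
  exact (posSemidef_conjTranspose_mul_self _).mul_mul_conjTranspose_same _

theorem trace_applyCh_conjTranspose_Qxz0_mul_rhoXZ {k : ℕ}
    (S : Fin k → Matrix ((Bit × Bit) × Bit) (Bit × Fin dR) ℂ) (ψ : Fin dH × Bit × Fin dR → ℂ)
    (x z : Bit) :
    (applyCh (fun i => (S i)ᴴ) (Qxz0 x z) * rhoXZ ψ x z).trace =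
      ((Qxz0 x z * applyCh S (rhoXZ ψ x z)).trace.re : ℂ) := by
  rw [← trace_mul_applyCh]
  have := trace_mul_nonneg (posSemidef_Qxz0 x z) (posSemidef_applyCh S (posSemidef_rhoXZ ψ x z))
  exact Complex.eq_re_of_ofReal_le (r := 0) (by simpa using this)

theorem IsSupDecoder.one_sub_le {ψ : Fin dH × Bit × Fin dR → ℂ} {η : ℝ} {k : ℕ}
    {S : Fin k → Matrix ((Bit × Bit) × Bit) (Bit × Fin dR) ℂ}
    (hS : IsSupDecoder ψ 1 (1 - η) S) (hη : η ≤ 1) :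
    1 - 3 / 4 * η ≤ 1 / 4 * ∑ x, ∑ z, ((Qxz0 x z * applyCh S (rhoXZ ψ x z)).trace).re := by
  obtain ⟨-, hsucc, hguess⟩ := hS
  nlinarith

end Decoder

theorem one_sub_mul_le_pow {p η : ℝ} (hη : η ≤ 2) (hp : 1 - η ≤ p) (n : ℕ) :
    1 - n * η ≤ p ^ n := by
  have := one_add_mul_le_pow (a := p - 1) (by linarith) n
  rw [add_sub_cancel] at this
  nlinarith [mul_le_mul_of_nonneg_left hp (Nat.cast_nonneg (α := ℝ) n)]

theorem strong_superdense_decoder_implies_nslot_statistical_distinguisher_general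
    (dH dR : ℕ)
    (ψ : Fin dH × Bit × Fin dR → ℂ)
    (n : ℕ)
    (η : ℝ) (hη : η ∈ Set.Icc (0:ℝ) 1)
    (hdec : ∃ (k : ℕ) (S : Fin k → Matrix ((Bit × Bit) × Bit) (Bit × Fin dR) ℂ),
      IsSupDecoder ψ 1 (1 - η) S) :
    ∃ M : Matrix ((Fin n → Bit × Fin dR) × ((Fin n → Bit) × (Fin n → Bit)) × Bit)
              ((Fin n → Bit × Fin dR) × ((Fin n → Bit) × (Fin n → Bit)) × Bit) ℂ,
      M.PosSemidef ∧ (1 - M).PosSemidef ∧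
      1 - 2 * n * η ≤ ((M * (rbarN ψ n 1 - rbarN ψ n 0)).trace).re := by
  obtain ⟨k, S, hS⟩ := hdec
  set E : Bit → Bit → Matrix (Bit × Fin dR) (Bit × Fin dR) ℂ :=
    fun x z => applyCh (fun i => (S i)ᴴ) (Qxz0 x z)
  have hE : ∀ x z, (E x z).PosSemidef := fun x z => posSemidef_applyCh _ (posSemidef_Qxz0 x z)
  refine ⟨distinguisher E n, posSemidef_distinguisher hE n,
    posSemidef_one_sub_distinguisher hE (posSemidef_one_sub_sum_applyCh_Qxz0 hS.1) n, ?_⟩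
  have hsucc : (1 / 4 : ℂ) * ∑ x, ∑ z, (E x z * rhoXZ ψ x z).trace =
      ((1 / 4 * ∑ x, ∑ z, (Qxz0 x z * applyCh S (rhoXZ ψ x z)).trace.re : ℝ) : ℂ) := by
    simp only [E, trace_applyCh_conjTranspose_Qxz0_mul_rhoXZ]
    push_cast
    rfl
  rw [trace_distinguisher_mul_rbarN_sub, hsucc, ← Complex.ofReal_pow, Complex.ofReal_re]
  have := one_sub_mul_le_pow (by linarith [hη.2]) (hS.one_sub_le hη.2) n
  nlinarith [hη.1]

/-- a `(1, 1-η)`-superdense decoder against `|ψ⟩` yields a statistical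
distinguisher with advantage at least `1 - 2nη` between the `n`-slot candidate EFI pair
`(ρ̄₀, ρ̄₁)` built from `|ψ⟩`. -/
theorem strong_superdense_decoder_implies_nslot_statistical_distinguisher
    (dH dR : ℕ) (hdH : 1 ≤ dH) (hdR : 1 ≤ dR)
    (ψ : Fin dH × Bit × Fin dR → ℂ)
    (hψ : ∑ p, Complex.normSq (ψ p) = 1)
    (n : ℕ) (hn : 1 ≤ n)
    (η : ℝ) (hη : η ∈ Set.Icc (0:ℝ) 1)
    (hdec : ∃ (k : ℕ) (S : Fin k → Matrix ((Bit × Bit) × Bit) (Bit × Fin dR) ℂ),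
      IsSupDecoder ψ 1 (1 - η) S) :
    ∃ M : Matrix ((Fin n → Bit × Fin dR) × ((Fin n → Bit) × (Fin n → Bit)) × Bit)
              ((Fin n → Bit × Fin dR) × ((Fin n → Bit) × (Fin n → Bit)) × Bit) ℂ,
      M.PosSemidef ∧ (1 - M).PosSemidef ∧
      1 - 2 * n * η ≤ ((M * (rbarN ψ n 1 - rbarN ψ n 0)).trace).re :=
  strong_superdense_decoder_implies_nslot_statistical_distinguisher_general dH dR ψ n η hη hdec

end BHRD
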